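/- Under the centered model with M_Z > 3 and for any λ ≥ 1, let S₂ = {(0, β) : μ^⊤β = 0, ‖β‖₂² = 1/M_Z} ∪ {(0, 0)} and u = (0, μ/‖μ‖₂) ∈ ℝ × ℝ^d. Then for every γ ∈ S₂, u^⊤ ∇²L^h_λ(γ) u ≤ −(1 − 3/M_Z)‖μ‖₂² < 0; i.e., every stationary point in S₂ is a strict saddle whose Hessian has a negative eigenvalue. -/

import Mathlib

/-!
Along `u = (0, μ/‖μ‖)` from `γ = (0, β)` with `β ⊥ μ` the intercept stays `0`, so the ridge term
is inert and `t ↦ L(γ + t u) = E h(A + t B)` with `A = βᵀZ`, `B = Y‖μ‖ + vᵀZ`, `v = μ/‖μ‖`. This is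
a quartic polynomial in `t` whose second derivative at `0` is `E[(3A² - 1) B²]`. Since `Y² = 1`
and `E Y = 0` with `Y` independent of `Z`, this is `3‖μ‖² E A² + 3 E[A² (vᵀZ)²] - ‖μ‖² - 1`.
Here `E A² = ‖β‖²`, and polarizing the rotation-invariant fourth moment with
`(x + y)⁴ + (x - y)⁴ = 2x⁴ + 2y⁴ + 12x²y²` gives `E[(aᵀZ)² (bᵀZ)²] = M_Z ‖a‖² ‖b‖² / 3` for `a ⊥ b`.
So the curvature is `(3‖β‖² - 1)‖μ‖² + M_Z ‖β‖² - 1`: it equals `-(1 - 3/M_Z)‖μ‖²` when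
`‖β‖² = 1/M_Z`, and `-‖μ‖² - 1` at `β = 0`.
-/

open MeasureTheory ProbabilityTheory
open scoped RealInnerProductSpace

/-- `ℝ^d` with the Euclidean norm. -/
abbrev Vec (d : ℕ) := EuclideanSpace ℝ (Fin d)

/-- `ℝ × ℝ^d` with the Euclidean (ℓ²) norm, the domain of the loss `(α, β) ↦ L(α, β)`. -/
abbrev Pr (d : ℕ) := WithLp 2 (ℝ × Vec d)

/-- Build the point `(α, β) ∈ ℝ × ℝ^d`. -/
noncomputable def mkp {d : ℕ} (α : ℝ) (β : Vec d) : Pr d :=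
  (WithLp.equiv 2 (ℝ × Vec d)).symm (α, β)

/-- The quartic loss `h(x) = (x² - 1)² / 4`. -/
noncomputable def hq (x : ℝ) : ℝ := (x ^ 2 - 1) ^ 2 / 4

/-- The population loss `γ = (α, β) ↦ E g(α + β⊤X) + (λ/2) α²` built from a scalar loss `g`. -/
noncomputable def popLoss {d : ℕ} {Ω : Type*} [MeasurableSpace Ω] (P : Measure Ω)
    (X : Ω → Vec d) (g : ℝ → ℝ) (lam : ℝ) (γ : Pr d) : ℝ :=
  (∫ ω, g ((WithLp.equiv 2 (ℝ × Vec d) γ).1 + ⟪(WithLp.equiv 2 (ℝ × Vec d) γ).2, X ω⟫) ∂P)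
    + lam / 2 * ((WithLp.equiv 2 (ℝ × Vec d) γ).1) ^ 2

lemma abs_pow_mul_pow_le {i j : ℕ} (hij : i + j ≤ 4) (x y : ℝ) :
    |x ^ i * y ^ j| ≤ 1 + x ^ 4 + y ^ 4 := by
  set m := max 1 (max |x| |y|)
  have hxm : |x| ≤ m := (le_max_left _ _).trans (le_max_right _ _)
  have hym : |y| ≤ m := (le_max_right _ _).trans (le_max_right _ _)
  have hm4 : m ^ 4 ≤ 1 + |x| ^ 4 + |y| ^ 4 := by
    have := pow_nonneg (abs_nonneg x) 4
    have := pow_nonneg (abs_nonneg y) 4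
    rcases max_choice 1 (max |x| |y|) with h | h <;> simp only [m, h]
    · linarith
    · rcases max_choice |x| |y| with h' | h' <;> rw [h'] <;> linarith
  calc |x ^ i * y ^ j| = |x| ^ i * |y| ^ j := by rw [abs_mul, abs_pow, abs_pow]
    _ ≤ m ^ i * m ^ j := by gcongr
    _ ≤ m ^ 4 := by rw [← pow_add]; exact pow_le_pow_right₀ (le_max_left _ _) hij
    _ ≤ 1 + x ^ 4 + y ^ 4 := by rwa [Even.pow_abs ⟨2, rfl⟩, Even.pow_abs ⟨2, rfl⟩] at hm4

theorem Polynomial.iteratedDeriv_two_eval_zero (p : Polynomial ℝ) :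
    iteratedDeriv 2 (fun t => p.eval t) 0 = 2 * p.coeff 2 := by
  have hderiv (q : Polynomial ℝ) : deriv (fun t => q.eval t) = fun t => q.derivative.eval t :=
    -- plain `funext` would resolve to `Polynomial.funext` in this namespace
    _root_.funext fun _ => q.deriv
  rw [iteratedDeriv_succ, iteratedDeriv_one, hderiv, hderiv]
  change eval 0 _ = _
  rw [← coeff_zero_eq_eval_zero, coeff_derivative, coeff_derivative]
  norm_num [mul_comm]

section FourthMoments

variable {Ω : Type*} [MeasurableSpace Ω] {P : Measure Ω} [IsFiniteMeasure P] {A B : Ω → ℝ}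

lemma MeasureTheory.MemLp.integrable_pow_four (hA : MemLp A 4 P) :
    Integrable (fun ω => A ω ^ 4) P := by
  simpa [Even.pow_abs ⟨2, rfl⟩] using hA.integrable_norm_pow' (p := 4)

lemma MeasureTheory.MemLp.integrable_pow_mul_pow (hA : MemLp A 4 P) (hB : MemLp B 4 P) {i j : ℕ}
    (hij : i + j ≤ 4) : Integrable (fun ω => A ω ^ i * B ω ^ j) P :=
  (((integrable_const 1).add hA.integrable_pow_four).add hB.integrable_pow_four).mono'
    ((hA.1.pow i).mul (hB.1.pow j)) (ae_of_all _ fun _ => abs_pow_mul_pow_le hij _ _)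

lemma integral_add_pow_four_add_integral_sub_pow_four (hA : MemLp A 4 P) (hB : MemLp B 4 P) :
    ∫ ω, (A ω + B ω) ^ 4 ∂P + ∫ ω, (A ω - B ω) ^ 4 ∂P
      = 2 * ∫ ω, A ω ^ 4 ∂P + 2 * ∫ ω, B ω ^ 4 ∂P + 12 * ∫ ω, A ω ^ 2 * B ω ^ 2 ∂P := by
  have hA4 := hA.integrable_pow_four
  have hB4 := hB.integrable_pow_four
  calc ∫ ω, (A ω + B ω) ^ 4 ∂P + ∫ ω, (A ω - B ω) ^ 4 ∂P
      = ∫ ω, ((A ω + B ω) ^ 4 + (A ω - B ω) ^ 4) ∂P :=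
        (integral_add (hA.add hB).integrable_pow_four (hA.sub hB).integrable_pow_four).symm
    _ = ∫ ω, (2 * A ω ^ 4 + 2 * B ω ^ 4 + 12 * (A ω ^ 2 * B ω ^ 2)) ∂P := by
        congr 1 with ω; ring
    _ = _ := by
        have hAB : Integrable (fun ω => A ω ^ 2 * B ω ^ 2) P :=
          hA.integrable_pow_mul_pow hB le_rfl
        rw [integral_add (by fun_prop) (by fun_prop), integral_add (by fun_prop) (by fun_prop),
          integral_const_mul, integral_const_mul, integral_const_mul]

end FourthMoments

lemma hq_add_mul (a b t : ℝ) :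
    hq (a + t * b) = hq a + a * (a ^ 2 - 1) * b * t + (3 * a ^ 2 - 1) * b ^ 2 / 2 * t ^ 2
      + a * b ^ 3 * t ^ 3 + b ^ 4 / 4 * t ^ 4 := by
  unfold hq; ring

open Polynomial in
lemma iteratedDeriv_two_integral_hq_add_mul {Ω : Type*} [MeasurableSpace Ω] {P : Measure Ω}
    [IsFiniteMeasure P] {A B : Ω → ℝ} (hA : MemLp A 4 P) (hB : MemLp B 4 P) :
    iteratedDeriv 2 (fun t => ∫ ω, hq (A ω + t * B ω) ∂P) 0
      = ∫ ω, (3 * A ω ^ 2 - 1) * B ω ^ 2 ∂P := by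
  have hmono (i j : ℕ) (hij : i + j ≤ 4 := by norm_num) := hA.integrable_pow_mul_pow hB hij
  have h40 := hmono 4 0
  have h20 := hmono 2 0
  have h31 := hmono 3 1
  have h11 := hmono 1 1
  have h22 := hmono 2 2
  have h02 := hmono 0 2
  have h13 := hmono 1 3
  have h04 := hmono 0 4
  have hq0 : Integrable (fun ω => hq (A ω)) P :=
    (by fun_prop : Integrable (fun ω => A ω ^ 4 * B ω ^ 0 / 4 - A ω ^ 2 * B ω ^ 0 / 2 + 1 / 4)
      P).congr (ae_of_all _ fun ω => by unfold hq; ring)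
  have hq1 : Integrable (fun ω => A ω * (A ω ^ 2 - 1) * B ω) P :=
    (by fun_prop : Integrable (fun ω => A ω ^ 3 * B ω ^ 1 - A ω ^ 1 * B ω ^ 1) P).congr
      (ae_of_all _ fun ω => by ring)
  have hq2 : Integrable (fun ω => (3 * A ω ^ 2 - 1) * B ω ^ 2 / 2) P :=
    (by fun_prop : Integrable (fun ω => 3 / 2 * (A ω ^ 2 * B ω ^ 2) - A ω ^ 0 * B ω ^ 2 / 2)
      P).congr (ae_of_all _ fun ω => by ring)
  have hq3 : Integrable (fun ω => A ω * B ω ^ 3) P := by simpa using h13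
  have hq4 : Integrable (fun ω => B ω ^ 4 / 4) P := by simpa using h04.div_const 4
  have hpoly : (fun t => ∫ ω, hq (A ω + t * B ω) ∂P) = fun t => eval t
      (C (∫ ω, hq (A ω) ∂P) + C (∫ ω, A ω * (A ω ^ 2 - 1) * B ω ∂P) * X
        + C (∫ ω, (3 * A ω ^ 2 - 1) * B ω ^ 2 / 2 ∂P) * X ^ 2
        + C (∫ ω, A ω * B ω ^ 3 ∂P) * X ^ 3 + C (∫ ω, B ω ^ 4 / 4 ∂P) * X ^ 4) := by
    funext t
    simp_rw [hq_add_mul]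
    rw [integral_add (by fun_prop) (by fun_prop), integral_add (by fun_prop) (by fun_prop),
      integral_add (by fun_prop) (by fun_prop), integral_add (by fun_prop) (by fun_prop),
      integral_mul_const, integral_mul_const, integral_mul_const, integral_mul_const]
    simp
  rw [hpoly, Polynomial.iteratedDeriv_two_eval_zero]
  simp [integral_div, mul_div_cancel₀]

section CenteredModel

variable {Ω E : Type*} [MeasurableSpace Ω] {P : Measure Ω}
  [NormedAddCommGroup E] [InnerProductSpace ℝ E]

lemma integral_rademacher_eq_zero [IsFiniteMeasure P] {Y : Ω → ℝ} (hY : Measurable Y)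
    (hYpm : ∀ ω, Y ω = 1 ∨ Y ω = -1)
    (hY1 : P {ω | Y ω = 1} = 1 / 2) (hY2 : P {ω | Y ω = -1} = 1 / 2) :
    ∫ ω, Y ω ∂P = 0 := by
  have hs1 : MeasurableSet {ω | Y ω = 1} := hY (measurableSet_singleton 1)
  have hs2 : MeasurableSet {ω | Y ω = -1} := hY (measurableSet_singleton (-1))
  have hYind : Y = {ω | Y ω = 1}.indicator 1 - {ω | Y ω = -1}.indicator 1 := by
    funext ω
    rcases hYpm ω with h | h <;> norm_num [Set.indicator, h]
  rw [hYind, integral_sub' ((integrable_const 1).indicator hs1)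
    ((integrable_const 1).indicator hs2), integral_indicator_one hs1,
    integral_indicator_one hs2, measureReal_def, measureReal_def, hY1, hY2, sub_self]

lemma integral_inner_pow_four {Z : Ω → E} {MZ : ℝ}
    (hMZ : ∀ u : E, ‖u‖ = 1 → ∫ ω, ⟪u, Z ω⟫ ^ 4 ∂P = MZ) (u : E) :
    ∫ ω, ⟪u, Z ω⟫ ^ 4 ∂P = MZ * ‖u‖ ^ 4 := by
  rcases eq_or_ne u 0 with rfl | hu
  · simp
  have hu' : ‖u‖ ≠ 0 := norm_ne_zero_iff.mpr hu
  have hscale (ω : Ω) : ⟪u, Z ω⟫ ^ 4 = ‖u‖ ^ 4 * ⟪‖u‖⁻¹ • u, Z ω⟫ ^ 4 := by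
    rw [real_inner_smul_left]; field_simp
  simp_rw [hscale]
  rw [integral_const_mul, hMZ _ (by simpa using norm_smul_inv_norm (𝕜 := ℝ) hu), mul_comm]

lemma memLp_inner_of_integral_pow_four [MeasurableSpace E] [OpensMeasurableSpace E]
    {Z : Ω → E} (hZ : Measurable Z) {MZ : ℝ} (hMZ0 : MZ ≠ 0)
    (hMZ4 : ∀ u : E, ∫ ω, ⟪u, Z ω⟫ ^ 4 ∂P = MZ * ‖u‖ ^ 4) (u : E) :
    MemLp (fun ω => ⟪u, Z ω⟫) 4 P := by
  rcases eq_or_ne u 0 with rfl | hu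
  · simp
  -- A non-integrable function has Bochner integral `0`, while `MZ * ‖u‖ ^ 4 ≠ 0`.
  have hint : Integrable (fun ω => ⟪u, Z ω⟫ ^ 4) P :=
    Integrable.of_integral_ne_zero (by rw [hMZ4]; positivity)
  have hmeas : AEStronglyMeasurable (fun ω => ⟪u, Z ω⟫) P :=
    ((continuous_const.inner continuous_id).measurable.comp hZ).aestronglyMeasurable
  refine (integrable_norm_rpow_iff hmeas (by norm_num) (by norm_num)).1 ?_
  simpa [Even.pow_abs ⟨2, rfl⟩] using hint

lemma integral_sq_mul_sq_of_inner_eq_zero [IsFiniteMeasure P] {Z : Ω → E} {MZ : ℝ}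
    (hMZ4 : ∀ u : E, ∫ ω, ⟪u, Z ω⟫ ^ 4 ∂P = MZ * ‖u‖ ^ 4)
    (hZ4 : ∀ u : E, MemLp (fun ω => ⟪u, Z ω⟫) 4 P) {a b : E} (hab : ⟪a, b⟫ = 0) :
    ∫ ω, ⟪a, Z ω⟫ ^ 2 * ⟪b, Z ω⟫ ^ 2 ∂P = MZ * ‖a‖ ^ 2 * ‖b‖ ^ 2 / 3 := by
  have hplus := hMZ4 (a + b)
  have hminus := hMZ4 (a - b)
  simp only [inner_add_left, inner_sub_left] at hplus hminus
  have hpolar := integral_add_pow_four_add_integral_sub_pow_four (hZ4 a) (hZ4 b)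
  have hnorm_plus : ‖a + b‖ ^ 4 = (‖a‖ ^ 2 + ‖b‖ ^ 2) ^ 2 := by
    rw [show ‖a + b‖ ^ 4 = (‖a + b‖ ^ 2) ^ 2 by ring, norm_add_sq_real, hab]; ring
  have hnorm_minus : ‖a - b‖ ^ 4 = (‖a‖ ^ 2 + ‖b‖ ^ 2) ^ 2 := by
    rw [show ‖a - b‖ ^ 4 = (‖a - b‖ ^ 2) ^ 2 by ring, norm_sub_sq_real, hab]; ring
  rw [hplus, hminus, hMZ4 a, hMZ4 b, hnorm_plus, hnorm_minus] at hpolar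
  linarith

lemma integral_three_sq_sub_one_mul_sq [IsProbabilityMeasure P] [MeasurableSpace E]
    [OpensMeasurableSpace E] {Y : Ω → ℝ} {Z : Ω → E} (hY : Measurable Y) (hZ : Measurable Z)
    (hYpm : ∀ ω, Y ω = 1 ∨ Y ω = -1) (hEY : ∫ ω, Y ω ∂P = 0) (hindep : IndepFun Y Z P)
    (hZcov : ∀ u v : E, ∫ ω, ⟪u, Z ω⟫ * ⟪v, Z ω⟫ ∂P = ⟪u, v⟫) {MZ : ℝ}
    (hMZ4 : ∀ u : E, ∫ ω, ⟪u, Z ω⟫ ^ 4 ∂P = MZ * ‖u‖ ^ 4)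
    (hZ4 : ∀ u : E, MemLp (fun ω => ⟪u, Z ω⟫) 4 P) {β v : E} (hβv : ⟪β, v⟫ = 0) (hv : ‖v‖ = 1)
    (c : ℝ) :
    ∫ ω, (3 * ⟪β, Z ω⟫ ^ 2 - 1) * (Y ω * c + ⟪v, Z ω⟫) ^ 2 ∂P
      = (3 * ‖β‖ ^ 2 - 1) * c ^ 2 + MZ * ‖β‖ ^ 2 - 1 := by
  have hmono (i j : ℕ) (hij : i + j ≤ 4 := by norm_num) :=
    (hZ4 β).integrable_pow_mul_pow (hZ4 v) hij
  have hββ : ∫ ω, ⟪β, Z ω⟫ ^ 2 ∂P = ‖β‖ ^ 2 := by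
    simpa [sq, real_inner_self_eq_norm_sq] using hZcov β β
  have hvv : ∫ ω, ⟪v, Z ω⟫ ^ 2 ∂P = 1 := by
    simpa [sq, real_inner_self_eq_norm_sq, hv] using hZcov v v
  have hβv4 := integral_sq_mul_sq_of_inner_eq_zero hMZ4 hZ4 hβv
  -- `Y² = 1`, and the term linear in `Y` has mean `E Y · E[…] = 0` by independence.
  have hsplit (ω : Ω) : (3 * ⟪β, Z ω⟫ ^ 2 - 1) * (Y ω * c + ⟪v, Z ω⟫) ^ 2
      = (3 * c ^ 2 * ⟪β, Z ω⟫ ^ 2 + 3 * (⟪β, Z ω⟫ ^ 2 * ⟪v, Z ω⟫ ^ 2) - c ^ 2 - ⟪v, Z ω⟫ ^ 2)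
        + Y ω * (2 * c * (3 * ⟪β, Z ω⟫ ^ 2 - 1) * ⟪v, Z ω⟫) := by
    rcases hYpm ω with h | h <;> rw [h] <;> ring
  have hφ : Measurable fun z : E => 2 * c * (3 * ⟪β, z⟫ ^ 2 - 1) * ⟪v, z⟫ := by fun_prop
  have hlinear : ∫ ω, Y ω * (2 * c * (3 * ⟪β, Z ω⟫ ^ 2 - 1) * ⟪v, Z ω⟫) ∂P = 0 := by
    have := (hindep.comp measurable_id hφ).integral_mul_eq_mul_integral
      hY.aestronglyMeasurable (hφ.comp hZ).aestronglyMeasurable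
    simpa [hEY] using this
  have h20 : Integrable (fun ω => ⟪β, Z ω⟫ ^ 2) P := by simpa using hmono 2 0
  have h02 : Integrable (fun ω => ⟪v, Z ω⟫ ^ 2) P := by simpa using hmono 0 2
  have h22 := hmono 2 2
  have h21 := hmono 2 1
  have h01 := hmono 0 1
  have hφZ : Integrable (fun ω => 2 * c * (3 * ⟪β, Z ω⟫ ^ 2 - 1) * ⟪v, Z ω⟫) P :=
    (by fun_prop : Integrable (fun ω => 6 * c * (⟪β, Z ω⟫ ^ 2 * ⟪v, Z ω⟫ ^ 1)
      - 2 * c * (⟪β, Z ω⟫ ^ 0 * ⟪v, Z ω⟫ ^ 1)) P).congr (ae_of_all _ fun ω => by ring)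
  have hYφZ := hφZ.bdd_mul (c := 1) hY.aestronglyMeasurable
    (ae_of_all _ fun ω => by rcases hYpm ω with h | h <;> simp [h])
  rw [integral_congr_ae (ae_of_all _ hsplit), integral_add (by fun_prop) hYφZ, hlinear,
    add_zero, integral_sub (by fun_prop) h02, integral_sub (by fun_prop) (by fun_prop),
    integral_add (by fun_prop) (by fun_prop), integral_const_mul, integral_const_mul,
    integral_const, probReal_univ, smul_eq_mul, hββ, hvv, hβv4, hv]
  ring

end CenteredModel

lemma popLoss_mkp_zero_add_smul {d : ℕ} {Ω : Type*} [MeasurableSpace Ω] (P : Measure Ω)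
    (X : Ω → Vec d) (g : ℝ → ℝ) (lam : ℝ) (β w : Vec d) (t : ℝ) :
    popLoss P X g lam (mkp 0 β + t • mkp 0 w) = ∫ ω, g (⟪β, X ω⟫ + t * ⟪w, X ω⟫) ∂P := by
  simp [popLoss, mkp, inner_add_left, real_inner_smul_left]

lemma iteratedDeriv_two_popLoss_hq_along_mean {d : ℕ} {Ω : Type*} [MeasurableSpace Ω]
    {P : Measure Ω} [IsProbabilityMeasure P] {Y : Ω → ℝ} {Z X : Ω → Vec d} {μ : Vec d}
    {MZ : ℝ} (lam : ℝ) (hμ : μ ≠ 0) (hY : Measurable Y) (hZ : Measurable Z)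
    (hYpm : ∀ ω, Y ω = 1 ∨ Y ω = -1) (hEY : ∫ ω, Y ω ∂P = 0) (hindep : IndepFun Y Z P)
    (hZcov : ∀ u v : Vec d, ∫ ω, ⟪u, Z ω⟫ * ⟪v, Z ω⟫ ∂P = ⟪u, v⟫)
    (hMZ4 : ∀ u : Vec d, ∫ ω, ⟪u, Z ω⟫ ^ 4 ∂P = MZ * ‖u‖ ^ 4)
    (hZ4 : ∀ u : Vec d, MemLp (fun ω => ⟪u, Z ω⟫) 4 P) (hX : ∀ ω, X ω = Y ω • μ + Z ω)
    {β : Vec d} (hμβ : ⟪μ, β⟫ = 0) :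
    iteratedDeriv 2 (fun t : ℝ => popLoss P X hq lam (mkp 0 β + t • mkp 0 (‖μ‖⁻¹ • μ))) 0
      = (3 * ‖β‖ ^ 2 - 1) * ‖μ‖ ^ 2 + MZ * ‖β‖ ^ 2 - 1 := by
  set v := ‖μ‖⁻¹ • μ
  have hv : ‖v‖ = 1 := by simpa using norm_smul_inv_norm (𝕜 := ℝ) hμ
  have hvμ : ⟪v, μ⟫ = ‖μ‖ := by
    rw [real_inner_smul_left, real_inner_self_eq_norm_sq]
    field_simp
  have hβv : ⟪β, v⟫ = 0 := by rw [real_inner_smul_right, real_inner_comm, hμβ, mul_zero]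
  have hline (t : ℝ) : popLoss P X hq lam (mkp 0 β + t • mkp 0 v)
      = ∫ ω, hq (⟪β, Z ω⟫ + t * (Y ω * ‖μ‖ + ⟪v, Z ω⟫)) ∂P := by
    simp [popLoss_mkp_zero_add_smul, hX, inner_add_right, real_inner_smul_right, hvμ,
      real_inner_comm μ β, hμβ]
  have hYbdd : MemLp Y 4 P :=
    .of_bound hY.aestronglyMeasurable 1
      (ae_of_all _ fun ω => by rcases hYpm ω with h | h <;> simp [h])
  have hB : MemLp (fun ω => Y ω * ‖μ‖ + ⟪v, Z ω⟫) 4 P := (hYbdd.mul_const _).add (hZ4 v)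
  rw [funext hline, iteratedDeriv_two_integral_hq_add_mul (hZ4 β) hB,
    integral_three_sq_sub_one_mul_sq hY hZ hYpm hEY hindep hZcov hMZ4 hZ4 hβv hv]

theorem quartic_population_loss_strict_saddles_general
    {d : ℕ} {Ω : Type*} [MeasurableSpace Ω] (P : Measure Ω) [IsProbabilityMeasure P]
    (Y : Ω → ℝ) (Z : Ω → Vec d) (X : Ω → Vec d) (μ : Vec d) (MZ lam : ℝ)
    (hμ : μ ≠ 0)
    (hY : Measurable Y) (hZ : Measurable Z)
    (hYpm : ∀ ω, Y ω = 1 ∨ Y ω = -1)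
    (hY1 : P {ω | Y ω = 1} = 1 / 2) (hY2 : P {ω | Y ω = -1} = 1 / 2)
    (hindep : IndepFun Y Z P)
    (hZcov : ∀ u v : Vec d, (∫ ω, ⟪u, Z ω⟫ * ⟪v, Z ω⟫ ∂P) = ⟪u, v⟫)
    (hMZ : ∀ u : Vec d, ‖u‖ = 1 → (∫ ω, ⟪u, Z ω⟫ ^ 4 ∂P) = MZ)
    (hX : ∀ ω, X ω = Y ω • μ + Z ω)
    (hMZ3 : 3 < MZ) :
    (-(1 - 3 / MZ) * ‖μ‖ ^ 2 < 0) ∧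
    ∀ γ ∈ ({γ : Pr d | ∃ β : Vec d, γ = mkp 0 β ∧ ⟪μ, β⟫ = 0 ∧ ‖β‖ ^ 2 = 1 / MZ}
        ∪ {mkp 0 0} : Set (Pr d)),
      iteratedDeriv 2
          (fun t : ℝ => popLoss P X hq lam (γ + t • mkp 0 (‖μ‖⁻¹ • μ))) 0
        ≤ -(1 - 3 / MZ) * ‖μ‖ ^ 2 := by
  have hMZ0 : 0 < MZ := by linarith
  have hMZ4 := integral_inner_pow_four hMZ
  have hessian {β : Vec d} (hμβ : ⟪μ, β⟫ = 0) :=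
    iteratedDeriv_two_popLoss_hq_along_mean lam hμ hY hZ hYpm
      (integral_rademacher_eq_zero hY hYpm hY1 hY2) hindep hZcov hMZ4
      (memLp_inner_of_integral_pow_four hZ hMZ0.ne' hMZ4) hX hμβ
  have hμ2 : 0 < ‖μ‖ ^ 2 := by positivity
  have h3 : 3 / MZ < 1 := (div_lt_one hMZ0).2 hMZ3
  refine ⟨by nlinarith [mul_pos (sub_pos.2 h3) hμ2], ?_⟩
  rintro γ (⟨β, rfl, hμβ, hβ⟩ | hγ)
  · rw [hessian hμβ, hβ]
    apply le_of_eq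
    field_simp
    ring
  · rw [Set.mem_singleton_iff.1 hγ, hessian (inner_zero_right μ)]
    have : 0 ≤ 3 / MZ * ‖μ‖ ^ 2 := by positivity
    simp only [norm_zero]
    linarith

/-- under the centered model with `M_Z > 3` and `λ ≥ 1`, at every point of
`S₂ = {(0, β) : μ⊤β = 0, ‖β‖² = 1/M_Z} ∪ {(0,0)}` the Hessian of `L^h_λ` in the direction
`u = (0, μ/‖μ‖)` is at most `−(1 − 3/M_Z)‖μ‖² < 0`: every point of `S₂` is a strict saddle. -/
theorem quartic_population_loss_strict_saddles
    {d : ℕ} {Ω : Type*} [MeasurableSpace Ω] (P : Measure Ω) [IsProbabilityMeasure P]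
    (Y : Ω → ℝ) (Z : Ω → Vec d) (X : Ω → Vec d) (μ : Vec d) (M MZ lam : ℝ)
    (hμ : μ ≠ 0) (hlam : 0 ≤ lam)
    (hY : Measurable Y) (hZ : Measurable Z)
    (hYpm : ∀ ω, Y ω = 1 ∨ Y ω = -1)
    (hY1 : P {ω | Y ω = 1} = 1 / 2) (hY2 : P {ω | Y ω = -1} = 1 / 2)
    (hindep : IndepFun Y Z P)
    (hZsg : ∀ u : Vec d, ‖u‖ = 1 → ∀ p : ℝ, 1 ≤ p →
      Integrable (fun ω => |⟪u, Z ω⟫| ^ p) P ∧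
        (∫ ω, |⟪u, Z ω⟫| ^ p ∂P) ^ (1 / p) ≤ Real.sqrt p * M)
    (hZmean : (∫ ω, Z ω ∂P) = 0)
    (hZcov : ∀ u v : Vec d, (∫ ω, ⟪u, Z ω⟫ * ⟪v, Z ω⟫ ∂P) = ⟪u, v⟫)
    (hZsym : ∀ O : Vec d ≃ₗᵢ[ℝ] Vec d,
      Measure.map (fun ω => O (Z ω)) P = Measure.map Z P)
    (hMZ : ∀ u : Vec d, ‖u‖ = 1 → (∫ ω, ⟪u, Z ω⟫ ^ 4 ∂P) = MZ)
    (hX : ∀ ω, X ω = Y ω • μ + Z ω)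
    (hMZ3 : 3 < MZ) (hlam1 : 1 ≤ lam) :
    (-(1 - 3 / MZ) * ‖μ‖ ^ 2 < 0) ∧
    ∀ γ ∈ ({γ : Pr d | ∃ β : Vec d, γ = mkp 0 β ∧ ⟪μ, β⟫ = 0 ∧ ‖β‖ ^ 2 = 1 / MZ}
        ∪ {mkp 0 0} : Set (Pr d)),
      iteratedDeriv 2
          (fun t : ℝ => popLoss P X hq lam (γ + t • mkp 0 (‖μ‖⁻¹ • μ))) 0
        ≤ -(1 - 3 / MZ) * ‖μ‖ ^ 2 :=
  quartic_population_loss_strict_saddles_general P Y Z X μ MZ lam hμ hY hZ hYpm hY1 hY2 hindep hZcov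
    hMZ hX hMZ3
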